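/- arXiv:math/0105045 — 2 statements merged into one kernel-verified Lean document; each statement's English description precedes it below -/
import Mathlib

section
/- non(Ufin(B_Γ,B_T)) = non(Ufin(Γ,T)) = 𝔵; that is, the minimal cardinality of a set of real numbers not satisfying Ufin(B_Γ,B_T), and the minimal cardinality of a set of real numbers not satisfying Ufin(Γ,T), both equal 𝔵, where 𝔵 is the minimal cardinality of a family Y ⊆ ℕ^ℕ which does not satisfy the excluded middle property. -/
open Set

namespace TauCoverPaper

/-- `a ⊆* b`: `a \ b` is finite. -/
def AlmostSubset (a b : Set ℕ) : Prop := (a \ b).Finite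

/-- `Y` is linearly quasiordered by `⊆*`. -/
def LinQuasi (Y : Set (Set ℕ)) : Prop :=
  ∀ a ∈ Y, ∀ b ∈ Y, AlmostSubset a b ∨ AlmostSubset b a

/-- `a` is a pseudo-intersection of the family `Y`. -/
def PseudoIntersection (a : Set ℕ) (Y : Set (Set ℕ)) : Prop :=
  a.Infinite ∧ ∀ b ∈ Y, AlmostSubset a b

/-- `Y` is centered: every nonempty finite subfamily has infinite intersection. -/
def Centered (Y : Set (Set ℕ)) : Prop :=
  ∀ F : Set (Set ℕ), F ⊆ Y → F.Finite → F.Nonempty → (⋂₀ F).Infinite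

/-- A tower: a family of infinite subsets of `ℕ`, linearly quasiordered by `⊆*`,
with no pseudo-intersection. -/
def IsTower (Y : Set (Set ℕ)) : Prop :=
  (∀ a ∈ Y, a.Infinite) ∧ LinQuasi Y ∧ ¬ ∃ a, PseudoIntersection a Y

variable {α : Type}

/-- A cover of the space `α`: the union is everything, and the whole space is
not a member. -/
def IsCover (𝒰 : Set (Set α)) : Prop := ⋃₀ 𝒰 = univ ∧ univ ∉ 𝒰

/-- A large cover: each point belongs to infinitely many members. -/
def IsLargeCover (𝒰 : Set (Set α)) : Prop :=
  IsCover 𝒰 ∧ ∀ x : α, {U ∈ 𝒰 | x ∈ U}.Infinite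

/-- An ω-cover: each finite set is contained in some member. -/
def IsOmegaCover (𝒰 : Set (Set α)) : Prop :=
  IsCover 𝒰 ∧ ∀ F : Set α, F.Finite → ∃ U ∈ 𝒰, F ⊆ U

/-- A γ-cover: infinite, and each point belongs to all but finitely many members. -/
def IsGammaCover (𝒰 : Set (Set α)) : Prop :=
  IsCover 𝒰 ∧ 𝒰.Infinite ∧ ∀ x : α, {U ∈ 𝒰 | x ∉ U}.Finite

/-- A τ-cover: a large cover such that for all `x, y`, one of the sets
`{U : x ∈ U, y ∉ U}`, `{U : y ∈ U, x ∉ U}` is finite. -/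
def IsTauCover (𝒰 : Set (Set α)) : Prop :=
  IsLargeCover 𝒰 ∧ ∀ x y : α,
    {U ∈ 𝒰 | x ∈ U ∧ y ∉ U}.Finite ∨ {U ∈ 𝒰 | y ∈ U ∧ x ∉ U}.Finite

/-- A τ*-cover: a large, countably infinite cover which, enumerated bijectively
as `⟨Uₙ⟩`, admits for each point `y` an infinite `r y ⊆ {n | y ∈ Uₙ}` such that
the family `{r y}` is linearly quasiordered by `⊆*`. -/
def IsTauStarCover (𝒰 : Set (Set α)) : Prop :=
  IsLargeCover 𝒰 ∧
  ∃ U : ℕ → Set α, Function.Injective U ∧ Set.range U = 𝒰 ∧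
    ∃ r : α → Set ℕ,
      (∀ y : α, (r y).Infinite ∧ r y ⊆ {n | y ∈ U n}) ∧
      (∀ y z : α, AlmostSubset (r y) (r z) ∨ AlmostSubset (r z) (r y))

/-- Ω : countable open ω-covers. -/
def OpenOmega (α : Type) [TopologicalSpace α] : Set (Set (Set α)) :=
  {𝒰 | 𝒰.Countable ∧ (∀ U ∈ 𝒰, IsOpen U) ∧ IsOmegaCover 𝒰}

/-- Γ : countable open γ-covers. -/
def OpenGamma (α : Type) [TopologicalSpace α] : Set (Set (Set α)) :=
  {𝒰 | 𝒰.Countable ∧ (∀ U ∈ 𝒰, IsOpen U) ∧ IsGammaCover 𝒰}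

/-- T : countable open τ-covers. -/
def OpenTau (α : Type) [TopologicalSpace α] : Set (Set (Set α)) :=
  {𝒰 | 𝒰.Countable ∧ (∀ U ∈ 𝒰, IsOpen U) ∧ IsTauCover 𝒰}

/-- T* : countable open τ*-covers. -/
def OpenTauStar (α : Type) [TopologicalSpace α] : Set (Set (Set α)) :=
  {𝒰 | 𝒰.Countable ∧ (∀ U ∈ 𝒰, IsOpen U) ∧ IsTauStarCover 𝒰}

/-- B_Ω : countable Borel ω-covers. -/
def BorelOmega (α : Type) [MeasurableSpace α] : Set (Set (Set α)) :=
  {𝒰 | 𝒰.Countable ∧ (∀ U ∈ 𝒰, MeasurableSet U) ∧ IsOmegaCover 𝒰}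

/-- B_Γ : countable Borel γ-covers. -/
def BorelGamma (α : Type) [MeasurableSpace α] : Set (Set (Set α)) :=
  {𝒰 | 𝒰.Countable ∧ (∀ U ∈ 𝒰, MeasurableSet U) ∧ IsGammaCover 𝒰}

/-- B_T : countable Borel τ-covers. -/
def BorelTau (α : Type) [MeasurableSpace α] : Set (Set (Set α)) :=
  {𝒰 | 𝒰.Countable ∧ (∀ U ∈ 𝒰, MeasurableSet U) ∧ IsTauCover 𝒰}

/-- The selection principle S₁(𝔘,𝔙). -/
def S1 (𝔘 𝔙 : Set (Set (Set α))) : Prop :=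
  ∀ 𝒰 : ℕ → Set (Set α), (∀ n, 𝒰 n ∈ 𝔘) →
    ∃ V : ℕ → Set α, (∀ n, V n ∈ 𝒰 n) ∧ Set.range V ∈ 𝔙

/-- The selection principle Sfin(𝔘,𝔙). -/
def Sfin (𝔘 𝔙 : Set (Set (Set α))) : Prop :=
  ∀ 𝒰 : ℕ → Set (Set α), (∀ n, 𝒰 n ∈ 𝔘) →
    ∃ F : ℕ → Set (Set α), (∀ n, (F n).Finite ∧ F n ⊆ 𝒰 n) ∧ (⋃ n, F n) ∈ 𝔙

/-- The selection principle Ufin(𝔘,𝔙). -/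
def Ufin (𝔘 𝔙 : Set (Set (Set α))) : Prop :=
  ∀ 𝒰 : ℕ → Set (Set α), (∀ n, 𝒰 n ∈ 𝔘) →
    (∀ n, ¬ ∃ F : Set (Set α), F ⊆ 𝒰 n ∧ F.Finite ∧ ⋃₀ F = univ) →
    ∃ F : ℕ → Set (Set α), (∀ n, (F n).Finite ∧ F n ⊆ 𝒰 n) ∧
      Set.range (fun n => ⋃₀ (F n)) ∈ 𝔙

/-- binom(𝔘,𝔙): each member of 𝔘 contains a subfamily belonging to 𝔙. -/
def Binom (𝔘 𝔙 : Set (Set (Set α))) : Prop :=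
  ∀ 𝒰 ∈ 𝔘, ∃ 𝒱 ⊆ 𝒰, 𝒱 ∈ 𝔙

/-- Borel measurability of a map into `P(ℕ)` (identified with the Cantor
space via characteristic functions): each coordinate is measurable. -/
def BorelMeasSets {β : Type} [MeasurableSpace β] (f : β → Set ℕ) : Prop :=
  ∀ n : ℕ, MeasurableSet {x | n ∈ f x}

/-- The excluded middle property for a family `Y ⊆ ℕ^ℕ`. -/
def ExcludedMiddleProp (Y : Set (ℕ → ℕ)) : Prop :=
  ∃ g : ℕ → ℕ,
    (∀ f ∈ Y, {n | f n < g n}.Infinite) ∧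
    ∀ f ∈ Y, ∀ h ∈ Y,
      {n | f n < g n ∧ g n ≤ h n}.Finite ∨ {n | h n < g n ∧ g n ≤ f n}.Finite

/-- non(J): the minimal cardinality of a set of reals not satisfying `J`. -/
noncomputable def nonCard (J : Set ℝ → Prop) : Cardinal :=
  sInf {c : Cardinal | ∃ X : Set ℝ, ¬ J X ∧ Cardinal.mk ↥X = c}

/-- add(J): the minimal cardinality of a family of sets of reals, each
satisfying `J`, whose union does not satisfy `J`. -/
noncomputable def addCard (J : Set ℝ → Prop) : Cardinal :=
  sInf {c : Cardinal | ∃ 𝔉 : Set (Set ℝ),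
    (∀ A ∈ 𝔉, J A) ∧ ¬ J (⋃₀ 𝔉) ∧ Cardinal.mk ↥𝔉 = c}

/-- 𝔱 : the minimal cardinality of a tower. -/
noncomputable def towerCard : Cardinal :=
  sInf {c : Cardinal | ∃ Y : Set (Set ℕ), IsTower Y ∧ Cardinal.mk ↥Y = c}

/-- 𝔵 : the minimal cardinality of a family `Y ⊆ ℕ^ℕ` without the excluded
middle property. -/
noncomputable def xCard : Cardinal :=
  sInf {c : Cardinal | ∃ Y : Set (ℕ → ℕ),
    ¬ ExcludedMiddleProp Y ∧ Cardinal.mk ↥Y = c}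

/-!
Enumerate countable covers as `𝒰ₙ = {e n m}` and send a point `x` to the function
`n ↦ min {m | x ∈ e n m}`. Selecting `{e n m | m < g n}` from `𝒰ₙ`, the point `x` lies in the
`n`-th selected set iff its function is below `g` at `n`, so a witness `g` of the excluded middle
property for these functions is a selection forming a τ-cover. Largeness needs the selected sets
to be proper: a point in only finitely many of them would be separated from each by a point
outside it, and a finite `⊆*`-chain of infinite sets has infinite intersection. Hence small sets
satisfy `Ufin(B_Γ, B_T)`.

Conversely, a family `Y` without the property, enlarged by the countably many `Pi.single n i`,
embeds in `ℝ` through Cantor space. There the sets `{f | f n ≤ m}` form open γ-covers, and a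
τ-cover selected from them yields the excluded middle property for `Y`: the points
`Pi.single n i` keep the selected sets for different `n` distinct.
-/

open Filter Topology

lemma AlmostSubset.refl (a : Set ℕ) : AlmostSubset a a := by
  simp [AlmostSubset]

lemma AlmostSubset.trans {a b c : Set ℕ} (hab : AlmostSubset a b) (hbc : AlmostSubset b c) :
    AlmostSubset a c :=
  (hab.union hbc).subset fun n ⟨ha, hc⟩ => by
    by_cases hb : n ∈ b
    exacts [Or.inr ⟨hb, hc⟩, Or.inl ⟨ha, hb⟩]

lemma LinQuasi.exists_almostSubset_forall {Y : Set (Set ℕ)} (hY : LinQuasi Y) (hfin : Y.Finite)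
    (hne : Y.Nonempty) : ∃ a ∈ Y, ∀ b ∈ Y, AlmostSubset a b := by
  refine hfin.induction_on_subset (motive := fun t _ => t.Nonempty → ∃ a ∈ t, ∀ b ∈ t,
    AlmostSubset a b) Y (fun h => absurd h not_nonempty_empty) ?_ hne
  intro a t ha hts _ ih _
  rcases t.eq_empty_or_nonempty with rfl | ht
  · exact ⟨a, mem_insert a ∅, by simpa using AlmostSubset.refl a⟩
  obtain ⟨c, hct, hc⟩ := ih ht
  rcases hY a ha c (hts hct) with hac | hca
  · exact ⟨a, mem_insert a t, forall_mem_insert.2 ⟨.refl a, fun b hb => hac.trans (hc b hb)⟩⟩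
  · exact ⟨c, mem_insert_of_mem a hct, forall_mem_insert.2 ⟨hca, hc⟩⟩

lemma LinQuasi.infinite_sInter {Y : Set (Set ℕ)} (hY : LinQuasi Y) (hfin : Y.Finite)
    (hne : Y.Nonempty) (hinf : ∀ a ∈ Y, a.Infinite) : (⋂₀ Y).Infinite := by
  obtain ⟨a, haY, ha⟩ := hY.exists_almostSubset_forall hfin hne
  have hdiff : (a \ ⋂₀ Y).Finite := (hfin.biUnion ha).subset fun n ⟨hna, hn⟩ => by
    obtain ⟨b, hb, hnb⟩ := not_forall₂.1 hn
    exact mem_biUnion hb ⟨hna, hnb⟩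
  exact ((hinf a haY).sdiff hdiff).mono fun n hn => by_contra fun h => hn.2 ⟨hn.1, h⟩

lemma excludedMiddleProp_iff {Y : Set (ℕ → ℕ)} :
    ExcludedMiddleProp Y ↔ ∃ g : ℕ → ℕ, (∀ f ∈ Y, {n | f n < g n}.Infinite) ∧
      ∀ f ∈ Y, ∀ h ∈ Y, AlmostSubset {n | f n < g n} {n | h n < g n} ∨
        AlmostSubset {n | h n < g n} {n | f n < g n} := by
  have hdiff (f h g : ℕ → ℕ) :
      {n | f n < g n} \ {n | h n < g n} = {n | f n < g n ∧ g n ≤ h n} := by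
    ext n
    simp
  simp only [ExcludedMiddleProp, AlmostSubset, hdiff]

lemma ExcludedMiddleProp.mono {Y Z : Set (ℕ → ℕ)} (hYZ : Y ⊆ Z) (hZ : ExcludedMiddleProp Z) :
    ExcludedMiddleProp Y :=
  let ⟨g, hinf, hlin⟩ := hZ
  ⟨g, fun f hf => hinf f (hYZ hf), fun f hf h hh => hlin f (hYZ hf) h (hYZ hh)⟩

lemma exists_forall_eventually_lt_of_countable {Y : Set (ℕ → ℕ)} (hY : Y.Countable) :
    ∃ g : ℕ → ℕ, ∀ f ∈ Y, ∀ᶠ n in atTop, f n < g n := by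
  rcases Y.eq_empty_or_nonempty with rfl | hne
  · exact ⟨0, fun f hf => hf.elim⟩
  obtain ⟨e, rfl⟩ := hY.exists_eq_range hne
  refine ⟨fun n => ∑ i ∈ Finset.range (n + 1), e i n + 1, ?_⟩
  rintro _ ⟨i, rfl⟩
  filter_upwards [eventually_ge_atTop i] with n hn
  exact Nat.lt_succ_of_le (Finset.single_le_sum (f := fun j => e j n) (fun j _ => Nat.zero_le _)
    (Finset.mem_range.2 (Nat.lt_succ_of_le hn)))

lemma excludedMiddleProp_of_countable {Y : Set (ℕ → ℕ)} (hY : Y.Countable) :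
    ExcludedMiddleProp Y := by
  obtain ⟨g, hg⟩ := exists_forall_eventually_lt_of_countable hY
  refine ⟨g, fun f hf => Nat.frequently_atTop_iff_infinite.1 (hg f hf).frequently,
    fun f _ h hh => Or.inl ?_⟩
  rw [← Nat.cofinite_eq_atTop] at hg
  exact (hg h hh).subset fun n hn => not_lt.2 hn.2

lemma not_excludedMiddleProp_univ : ¬ ExcludedMiddleProp univ := fun ⟨g, hinf, _⟩ =>
  hinf g (mem_univ g) (by simp)

lemma aleph0_le_xCard : Cardinal.aleph0 ≤ xCard :=
  le_csInf ⟨_, univ, not_excludedMiddleProp_univ, rfl⟩ <| by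
    rintro _ ⟨Y, hY, rfl⟩
    by_contra! h
    exact hY <| excludedMiddleProp_of_countable <|
      countable_coe_iff.1 (Cardinal.mk_le_aleph0_iff.1 h.le)

lemma excludedMiddleProp_of_mk_lt_xCard {Y : Set (ℕ → ℕ)} (hY : Cardinal.mk Y < xCard) :
    ExcludedMiddleProp Y :=
  by_contra fun h => hY.not_ge (csInf_le' ⟨Y, h, rfl⟩)

lemma exists_not_excludedMiddleProp_mk_eq_xCard :
    ∃ Y : Set (ℕ → ℕ), ¬ ExcludedMiddleProp Y ∧ Cardinal.mk Y = xCard :=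
  csInf_mem (s := {c | ∃ Y : Set (ℕ → ℕ), ¬ ExcludedMiddleProp Y ∧ Cardinal.mk Y = c})
    ⟨_, univ, not_excludedMiddleProp_univ, rfl⟩

section Covers

variable {α : Type}

lemma isTauCover_range_of_linear {V : ℕ → Set α} (hV : ∀ n, V n ≠ univ)
    (hinf : ∀ x, {n | x ∈ V n}.Infinite)
    (hlin : ∀ x y, AlmostSubset {n | x ∈ V n} {n | y ∈ V n} ∨
      AlmostSubset {n | y ∈ V n} {n | x ∈ V n}) :
    IsTauCover (range V) := by
  have hlarge : ∀ x, {U ∈ range V | x ∈ U}.Infinite := by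
    intro x hfin
    have hout : ∀ W ∈ {U ∈ range V | x ∈ U}, ∃ p, p ∉ W := by
      rintro _ ⟨⟨n, rfl⟩, -⟩
      exact (ne_univ_iff_exists_notMem _).1 (hV n)
    have : Nonempty α := ⟨x⟩
    choose! ρ hρ using hout
    set P := insert x (ρ '' {U ∈ range V | x ∈ U})
    have hP : LinQuasi ((fun p => {n | p ∈ V n}) '' P) := by
      rintro _ ⟨p, -, rfl⟩ _ ⟨q, -, rfl⟩
      exact hlin p q
    obtain ⟨n, hn⟩ := (hP.infinite_sInter (((hfin.image ρ).insert x).image _)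
      ⟨_, x, mem_insert x _, rfl⟩ (by rintro _ ⟨p, -, rfl⟩; exact hinf p)).nonempty
    have hmem : ∀ p ∈ P, p ∈ V n := fun p hp => hn _ ⟨p, hp, rfl⟩
    have hW : V n ∈ {U ∈ range V | x ∈ U} := ⟨⟨n, rfl⟩, hmem x (mem_insert x _)⟩
    exact hρ _ hW (hmem _ (mem_insert_of_mem x ⟨_, hW, rfl⟩))
  refine ⟨⟨⟨eq_univ_of_forall fun x => ?_, fun ⟨n, hn⟩ => hV n hn⟩, hlarge⟩, fun x y => ?_⟩
  · obtain ⟨n, hn⟩ := (hinf x).nonempty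
    exact ⟨V n, ⟨n, rfl⟩, hn⟩
  · refine (hlin x y).imp (fun h => (h.image V).subset ?_) (fun h => (h.image V).subset ?_) <;>
      rintro _ ⟨⟨n, rfl⟩, h₁, h₂⟩ <;> exact ⟨n, ⟨h₁, h₂⟩, rfl⟩

lemma IsLargeCover.infinite_setOf_mem {V : ℕ → Set α} (hV : IsLargeCover (range V)) (x : α) :
    {n | x ∈ V n}.Infinite := fun hfin =>
  hV.2 x ((hfin.image V).subset (by rintro _ ⟨⟨n, rfl⟩, hx⟩; exact ⟨n, hx, rfl⟩))

lemma IsTauCover.almostSubset_or {V : ℕ → Set α} (hV : IsTauCover (range V))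
    (hinj : InjOn V {n | (V n).Nonempty}) (x y : α) :
    AlmostSubset {n | x ∈ V n} {n | y ∈ V n} ∨ AlmostSubset {n | y ∈ V n} {n | x ∈ V n} := by
  have key : ∀ x y, {U ∈ range V | x ∈ U ∧ y ∉ U}.Finite →
      AlmostSubset {n | x ∈ V n} {n | y ∈ V n} := fun x y hfin =>
    Finite.of_finite_image (hfin.subset (by rintro _ ⟨n, hn, rfl⟩; exact ⟨⟨n, rfl⟩, hn⟩))
      (hinj.mono fun n hn => (⟨x, hn.1⟩ : (V n).Nonempty))
  exact (hV.2 x y).imp (key x y) (key y x)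

lemma not_exists_finite_subcover_of_monotone {A : ℕ → Set α} (hA : Monotone A)
    (hne : ∀ m, A m ≠ univ) : ¬ ∃ F ⊆ range A, F.Finite ∧ ⋃₀ F = univ := by
  rw [← image_univ, exists_subset_image_finite_and]
  rintro ⟨t, -, hfin, hcov⟩
  obtain ⟨b, hb⟩ := hfin.bddAbove
  refine hne b (eq_univ_of_univ_subset (hcov ▸ sUnion_subset ?_))
  rintro _ ⟨m, hm, rfl⟩
  exact hA (hb hm)

lemma isGammaCover_range_of_monotone {A : ℕ → Set α} (hA : Monotone A)
    (hcov : ∀ x, ∃ m, x ∈ A m) (hne : ∀ m, A m ≠ univ) : IsGammaCover (range A) := by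
  have hunion : ⋃₀ range A = univ := eq_univ_of_forall fun x =>
    let ⟨m, hm⟩ := hcov x
    ⟨A m, ⟨m, rfl⟩, hm⟩
  refine ⟨⟨hunion, fun ⟨m, hm⟩ => hne m hm⟩,
    fun hfin => not_exists_finite_subcover_of_monotone hA hne ⟨_, subset_rfl, hfin, hunion⟩,
    fun x => ?_⟩
  obtain ⟨m, hm⟩ := hcov x
  refine ((finite_Iio m).image A).subset ?_
  rintro _ ⟨⟨k, rfl⟩, hk⟩
  exact ⟨k, lt_of_not_ge fun h => hk (hA h hm), rfl⟩

lemma exists_sUnion_eq_setOf_lt (ψ : α → ℕ) {F : Set (Set α)} (hF : F.Finite)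
    (hFψ : F ⊆ range fun m => {x | ψ x ≤ m}) : ∃ k, ⋃₀ F = {x | ψ x < k} := by
  induction F, hF using Set.Finite.induction_on with
  | empty => exact ⟨0, by simp⟩
  | @insert U F _ _ ih =>
    obtain ⟨k, hk⟩ := ih ((subset_insert U F).trans hFψ)
    obtain ⟨m, rfl⟩ := hFψ (mem_insert _ F)
    refine ⟨max (m + 1) k, ?_⟩
    ext x
    simp only [sUnion_insert, hk, mem_union, mem_ofPred_eq]
    omega

end Covers

theorem ufin_borelGamma_borelTau_of_mk_lt_xCard {α : Type} [MeasurableSpace α]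
    (hα : Cardinal.mk α < xCard) : Ufin (BorelGamma α) (BorelTau α) := by
  classical
  intro 𝒰 h𝒰 hnfs
  choose e he using fun n => (h𝒰 n).1.exists_eq_range (h𝒰 n).2.2.2.1.nonempty
  have hcov (x : α) (n : ℕ) : ∃ m, x ∈ e n m := by
    obtain ⟨U, hU, hxU⟩ := mem_sUnion.1 ((h𝒰 n).2.2.1.1.symm ▸ mem_univ x)
    obtain ⟨m, rfl⟩ := he n ▸ hU
    exact ⟨m, hxU⟩
  let ψ : α → ℕ → ℕ := fun x n => Nat.find (hcov x n)
  obtain ⟨g, hinf, hlin⟩ := excludedMiddleProp_iff.1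
    (excludedMiddleProp_of_mk_lt_xCard (Y := range ψ) (Cardinal.mk_range_le.trans_lt hα))
  have hF n : (e n '' Iio (g n)).Finite ∧ e n '' Iio (g n) ⊆ 𝒰 n :=
    ⟨(finite_Iio _).image _, he n ▸ image_subset_range _ _⟩
  have hV n : ⋃₀ (e n '' Iio (g n)) = {x | ψ x n < g n} := by
    ext x
    simp [ψ]
  refine ⟨fun n => e n '' Iio (g n), hF, countable_range _, ?_,
    isTauCover_range_of_linear ?_ ?_ ?_⟩
  · rintro _ ⟨n, rfl⟩
    exact MeasurableSet.sUnion (hF n).1.countable fun U hU => (h𝒰 n).2.1 U ((hF n).2 hU)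
  · exact fun n hn => hnfs n ⟨_, (hF n).2, (hF n).1, hn⟩
  · simpa only [hV, mem_ofPred_eq] using fun x => hinf (ψ x) ⟨x, rfl⟩
  · simpa only [hV, mem_ofPred_eq] using fun x y => hlin (ψ x) ⟨x, rfl⟩ (ψ y) ⟨y, rfl⟩

theorem Ufin.openGamma_openTau {α : Type} [TopologicalSpace α] [MeasurableSpace α]
    [OpensMeasurableSpace α] (h : Ufin (BorelGamma α) (BorelTau α)) :
    Ufin (OpenGamma α) (OpenTau α) := by
  intro 𝒰 h𝒰 hnfs
  obtain ⟨F, hF, hcount, -, hτ⟩ := h 𝒰 (fun n => ⟨(h𝒰 n).1,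
    fun U hU => ((h𝒰 n).2.1 U hU).measurableSet, (h𝒰 n).2.2⟩) hnfs
  refine ⟨F, hF, hcount, ?_, hτ⟩
  rintro _ ⟨n, rfl⟩
  exact isOpen_sUnion fun U hU => (h𝒰 n).2.1 U ((hF n).2 hU)

theorem excludedMiddleProp_range_of_ufin {X : Type} [TopologicalSpace X] {Ψ : X → ℕ → ℕ}
    (hΨ : Continuous Ψ) (hsingle : ∀ n i, Pi.single n i ∈ range Ψ)
    (hX : Ufin (OpenGamma X) (OpenTau X)) : ExcludedMiddleProp (range Ψ) := by
  choose p hp using hsingle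
  have hpn (n i : ℕ) : Ψ (p n i) n = i := by simp [hp]
  have hpk {n k : ℕ} (h : k ≠ n) (i : ℕ) : Ψ (p n i) k = 0 := by simp [hp, h]
  let A : ℕ → ℕ → Set X := fun n m => {x | Ψ x n ≤ m}
  have hmono n : Monotone (A n) := fun _ _ h _ hx => le_trans hx h
  have hne n m : A n m ≠ univ := fun h => by
    have : p n (m + 1) ∈ A n m := h ▸ mem_univ _
    simp [A, hpn] at this
  have hopen n m : IsOpen (A n m) :=
    ((continuous_apply n).comp hΨ).isOpen_preimage (Iic m) (isOpen_discrete _)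
  obtain ⟨F, hF, -, -, hτ⟩ := hX (fun n => range (A n))
    (fun n => ⟨countable_range _, by rintro _ ⟨m, rfl⟩; exact hopen n m,
      isGammaCover_range_of_monotone (hmono n) (fun x => ⟨Ψ x n, le_refl (Ψ x n)⟩) (hne n)⟩)
    (fun n => not_exists_finite_subcover_of_monotone (hmono n) (hne n))
  choose g hg using fun n => exists_sUnion_eq_setOf_lt (Ψ · n) (hF n).1 (hF n).2
  -- `p n (g n)` lies in every nonempty selected set except the `n`-th one
  have hinj : InjOn (fun n => ⋃₀ F n) {n | (⋃₀ F n).Nonempty} := by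
    rintro n - n' ⟨x, hx⟩ (h : ⋃₀ F n = ⋃₀ F n')
    by_contra hnn'
    rw [hg] at hx
    have hq : p n (g n) ∈ ⋃₀ F n' := by
      rw [hg, mem_ofPred_eq, hpk (Ne.symm hnn')]
      exact (Nat.zero_le _).trans_lt hx
    rw [← h, hg] at hq
    simp [hpn] at hq
  refine excludedMiddleProp_iff.2 ⟨g, ?_, ?_⟩
  · rintro _ ⟨x, rfl⟩
    simpa [hg] using hτ.1.infinite_setOf_mem x
  · rintro _ ⟨x, rfl⟩ _ ⟨y, rfl⟩
    simpa [hg] using hτ.almostSubset_or hinj x y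

lemma isEmbedding_decide_eq : IsEmbedding fun i j : ℕ => decide (i = j) := by
  refine ⟨⟨DiscreteTopology.eq_bot.trans (eq_bot_of_singletons_open fun i => ?_).symm⟩,
    fun i i' h => (by simpa using congrFun h i : i' = i).symm⟩
  refine isOpen_induced_iff.2 ⟨_,
    (continuous_apply i : Continuous fun b : ℕ → Bool => b i).isOpen_preimage {true}
      (isOpen_discrete _), ?_⟩
  ext i'
  simp [eq_comm]

lemma exists_isEmbedding_nat_nat_real : ∃ φ : (ℕ → ℕ) → ℝ, IsEmbedding φ :=
  ⟨_, IsEmbedding.subtypeVal.comp <| cantorSetHomeomorphNatToBool.symm.isEmbedding.comp <|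
    cantorSpaceHomeomorphNatToCantorSpace.symm.isEmbedding.comp <|
      IsEmbedding.piMap fun _ => isEmbedding_decide_eq⟩

theorem exists_not_ufin_openGamma_openTau_mk_le_xCard :
    ∃ X : Set ℝ, ¬ Ufin (OpenGamma X) (OpenTau X) ∧ Cardinal.mk X ≤ xCard := by
  obtain ⟨Y, hY, hYcard⟩ := exists_not_excludedMiddleProp_mk_eq_xCard
  let Γ := Y ∪ range fun p : ℕ × ℕ => Pi.single p.1 p.2
  obtain ⟨φ, hφ⟩ := exists_isEmbedding_nat_nat_real
  let e := (hφ.comp (IsEmbedding.subtypeVal (p := (· ∈ Γ)))).toHomeomorph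
  have hrange : range (Subtype.val ∘ e.symm) = Γ :=
    (e.symm.surjective.range_comp _).trans Subtype.range_coe
  refine ⟨range (φ ∘ Subtype.val : Γ → ℝ), fun hX => hY ?_, ?_⟩
  · refine (excludedMiddleProp_range_of_ufin (continuous_subtype_val.comp e.symm.continuous)
      (fun n i => by rw [hrange]; exact Or.inr ⟨(n, i), rfl⟩) hX).mono
      (by rw [hrange]; exact subset_union_left)
  · exact Cardinal.mk_range_le.trans <| (Cardinal.mk_union_le _ _).trans <|
      Cardinal.add_le_of_le aleph0_le_xCard hYcard.le <|
        Cardinal.mk_range_le.trans (Cardinal.mk_le_aleph0.trans aleph0_le_xCard)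

lemma nonCard_eq {J : Set ℝ → Prop} {κ : Cardinal} (hsmall : ∀ X : Set ℝ, Cardinal.mk X < κ → J X)
    (hwit : ∃ X : Set ℝ, ¬ J X ∧ Cardinal.mk X ≤ κ) : nonCard J = κ := by
  obtain ⟨X, hX, hXκ⟩ := hwit
  have hX' : Cardinal.mk X ∈ {c | ∃ X : Set ℝ, ¬ J X ∧ Cardinal.mk X = c} := ⟨X, hX, rfl⟩
  refine le_antisymm ((csInf_le' hX').trans hXκ) (le_csInf ⟨_, hX'⟩ ?_)
  rintro _ ⟨Y, hY, rfl⟩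
  exact not_lt.1 fun h => hY (hsmall Y h)

/-- non(Ufin(B_Γ,B_T)) = non(Ufin(Γ,T)) = 𝔵. -/
theorem statement13 :
    nonCard (fun X : Set ℝ => Ufin (BorelGamma ↥X) (BorelTau ↥X)) = xCard ∧
    nonCard (fun X : Set ℝ => Ufin (OpenGamma ↥X) (OpenTau ↥X)) = xCard := by
  obtain ⟨X, hX, hXcard⟩ := exists_not_ufin_openGamma_openTau_mk_le_xCard
  have hsmall (X : Set ℝ) (h : Cardinal.mk X < xCard) : Ufin (BorelGamma X) (BorelTau X) :=
    ufin_borelGamma_borelTau_of_mk_lt_xCard h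
  exact ⟨nonCard_eq hsmall ⟨X, fun h => hX h.openGamma_openTau, hXcard⟩,
    nonCard_eq (fun X h => (hsmall X h).openGamma_openTau) ⟨X, hX, hXcard⟩⟩

end TauCoverPaper
end

section
/- Assume that Y ⊆ [ℕ]^∞ is linearly quasiordered by ⊆*, and that for some cardinal κ < 𝔱, Y = ⋃_{α<κ} Y_α where each Y_α has a pseudo-intersection. Then Y has a pseudo-intersection. -/
open Set

namespace TauCoverPaper

variable {α : Type}

theorem almostSubset_trans {a b c : Set ℕ} (h1 : AlmostSubset a b)
    (h2 : AlmostSubset b c) : AlmostSubset a c := by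
  refine (h1.union h2).subset ?_
  intro x hx
  by_cases hb : x ∈ b
  · exact Or.inr ⟨hb, hx.2⟩
  · exact Or.inl ⟨hx.1, hb⟩

/-- If `Y ⊆ [ℕ]^∞` is linearly quasiordered by `⊆*` and is a union of fewer
than 𝔱 many families each having a pseudo-intersection, then `Y` has a
pseudo-intersection. -/
theorem statement15 (Y : Set (Set ℕ)) (hYinf : ∀ a ∈ Y, a.Infinite)
    (hlin : LinQuasi Y) (ι : Type) (hκ : Cardinal.mk ι < towerCard)
    (Yi : ι → Set (Set ℕ)) (hY : Y = ⋃ i, Yi i)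
    (hpi : ∀ i, ∃ a, PseudoIntersection a (Yi i)) :
    ∃ a, PseudoIntersection a Y := by
  by_cases hcase : ∃ i, ∀ y ∈ Y, ∃ c ∈ Yi i, AlmostSubset c y
  · obtain ⟨i, hi⟩ := hcase
    obtain ⟨a, ha_inf, ha⟩ := hpi i
    refine ⟨a, ha_inf, fun y hy => ?_⟩
    obtain ⟨c, hc, hcy⟩ := hi y hy
    exact almostSubset_trans (ha c hc) hcy
  · push_neg at hcase
    -- for each i, pick b i ∈ Y below all of Yi i
    choose b hbY hb using hcase
    have hbelow : ∀ i, ∀ c ∈ Yi i, AlmostSubset (b i) c := by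
      intro i c hc
      have hcY : c ∈ Y := hY ▸ mem_iUnion.2 ⟨i, hc⟩
      rcases hlin (b i) (hbY i) c hcY with h | h
      · exact h
      · exact absurd h (hb i c hc)
    -- B = range b is a linearly quasiordered family of infinite sets of size < 𝔱
    set B : Set (Set ℕ) := Set.range b with hB
    have hBY : B ⊆ Y := by rintro _ ⟨i, rfl⟩; exact hbY i
    have hBpi : ∃ a, PseudoIntersection a B := by
      by_contra hno
      have htower : IsTower B :=
        ⟨fun x hx => hYinf x (hBY hx), fun x hx y hy => hlin x (hBY hx) y (hBY hy), hno⟩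
      have hle : towerCard ≤ Cardinal.mk ↥B :=
        csInf_le' ⟨B, htower, rfl⟩
      have : Cardinal.mk ↥B ≤ Cardinal.mk ι := Cardinal.mk_range_le
      exact absurd (lt_of_le_of_lt (hle.trans this) hκ) (lt_irrefl _)
    obtain ⟨a, ha_inf, ha⟩ := hBpi
    refine ⟨a, ha_inf, fun y hy => ?_⟩
    obtain ⟨i, hiy⟩ := mem_iUnion.1 (hY ▸ hy)
    exact almostSubset_trans (ha (b i) ⟨i, rfl⟩) (hbelow i y hiy)

end TauCoverPaper
end
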